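/- Let A ∈ ℝ^{n×n}, let V and V_ss be symmetric positive definite n×n matrices, let Σ be symmetric positive semidefinite, and suppose A V_ss + V_ss Aᵀ + Σ = 0. Then tr{ (V_ss⁻¹ − V⁻¹) A (V − V_ss) } = −(1/2) tr{ (V_ss⁻¹ − V⁻¹) Σ (V_ss⁻¹ − V⁻¹) V } ≤ 0. Moreover, if Σ is positive definite, then equality holds if and only if V = V_ss. -/

import Mathlib

open Matrix

/-!
Put `D = V_ss⁻¹ - V⁻¹`, so that `V - V_ss = V_ss D V`. Transposing, and using that `D`, `V` and
`V_ss` are symmetric, `tr(D A V_ss D V) = tr(D V_ss Aᵀ D V)`; hence twice the rate is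
`tr(D (A V_ss + V_ss Aᵀ) D V) = -tr(D Σ D V)`. Writing `V = Bᵀ B`, this last trace is the trace of
the positive semidefinite matrix `B (D Σ D) Bᵀ`, so it is nonnegative, and it vanishes only when
`D Σ D V = 0`, which forces `D = 0` once `Σ` and `V` are invertible.
-/

namespace Matrix

section Lyapunov

variable {n R : Type*} [Fintype n] [CommRing R]

theorem mul_inv_sub_inv_mul [DecidableEq n] {V W : Matrix n n R} (hV : IsUnit V.det)
    (hW : IsUnit W.det) : W * (W⁻¹ - V⁻¹) * V = V - W := by
  rw [Matrix.mul_sub, Matrix.sub_mul, mul_nonsing_inv _ hW, Matrix.one_mul, Matrix.mul_assoc,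
    nonsing_inv_mul _ hV, Matrix.mul_one]

theorem two_mul_trace_of_lyapunov_eq {A S D V W : Matrix n n R} (hD : D.IsSymm) (hV : V.IsSymm)
    (hW : W.IsSymm) (hLyap : A * W + W * Aᵀ + S = 0) :
    2 * (D * A * (W * D * V)).trace = -(D * S * D * V).trace := by
  have hsymm : (D * A * (W * D * V)).trace = (D * (W * Aᵀ) * D * V).trace := by
    rw [← trace_transpose]
    simp only [transpose_mul, hD.eq, hV.eq, hW.eq, Matrix.mul_assoc]
    rw [trace_mul_comm]
    simp only [Matrix.mul_assoc]
  have hS : S = -(A * W + W * Aᵀ) := eq_neg_of_add_eq_zero_right hLyap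
  calc 2 * (D * A * (W * D * V)).trace
      = (D * (A * W) * D * V).trace + (D * (W * Aᵀ) * D * V).trace := by
        rw [two_mul, ← hsymm]; simp only [Matrix.mul_assoc]
    _ = -(D * S * D * V).trace := by
        rw [← trace_add, ← Matrix.add_mul, ← Matrix.add_mul, ← Matrix.mul_add, hS]
        simp only [Matrix.mul_neg, Matrix.neg_mul, trace_neg, neg_neg]

end Lyapunov

theorem trace_mul_conjTranspose_mul_self {m n R : Type*} [Fintype m] [Fintype n]
    [CommSemiring R] [StarRing R] (P : Matrix n n R) (B : Matrix m n R) :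
    (P * (Bᴴ * B)).trace = (B * P * Bᴴ).trace := by
  rw [← Matrix.mul_assoc, trace_mul_comm]
  simp only [Matrix.mul_assoc]

section PosSemidef

open scoped ComplexOrder MatrixOrder

variable {n 𝕜 : Type*} [Fintype n] [RCLike 𝕜]

theorem PosSemidef.exists_eq_conjTranspose_mul_self {V : Matrix n n 𝕜} (hV : V.PosSemidef) :
    ∃ B : Matrix n n 𝕜, V = Bᴴ * B := by
  classical
  exact CStarAlgebra.nonneg_iff_eq_star_mul_self.mp hV.nonneg

theorem PosSemidef.conjTranspose_mul_mul_same_eq_zero_iff {m : Type*} {S : Matrix n n 𝕜}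
    (hS : S.PosSemidef) (M : Matrix n m 𝕜) : Mᴴ * S * M = 0 ↔ S * M = 0 := by
  refine ⟨fun h ↦ ?_, fun h ↦ by rw [Matrix.mul_assoc, h, Matrix.mul_zero]⟩
  obtain ⟨C, rfl⟩ := hS.exists_eq_conjTranspose_mul_self
  have hCM : C * M = 0 := by
    rw [← conjTranspose_mul_self_eq_zero, conjTranspose_mul]
    simpa only [Matrix.mul_assoc] using h
  rw [Matrix.mul_assoc, hCM, Matrix.mul_zero]

theorem PosSemidef.trace_mul_nonneg {P V : Matrix n n 𝕜} (hP : P.PosSemidef)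
    (hV : V.PosSemidef) : 0 ≤ (P * V).trace := by
  obtain ⟨B, rfl⟩ := hV.exists_eq_conjTranspose_mul_self
  rw [trace_mul_conjTranspose_mul_self]
  exact (hP.mul_mul_conjTranspose_same B).trace_nonneg

theorem PosSemidef.trace_mul_eq_zero_iff {P V : Matrix n n 𝕜} (hP : P.PosSemidef)
    (hV : V.PosSemidef) : (P * V).trace = 0 ↔ P * V = 0 := by
  refine ⟨fun h ↦ ?_, fun h ↦ by rw [h, trace_zero]⟩
  obtain ⟨B, rfl⟩ := hV.exists_eq_conjTranspose_mul_self
  rw [trace_mul_conjTranspose_mul_self, (hP.mul_mul_conjTranspose_same B).trace_eq_zero_iff] at h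
  have hPB : P * Bᴴ = 0 :=
    (hP.conjTranspose_mul_mul_same_eq_zero_iff Bᴴ).mp (by rwa [conjTranspose_conjTranspose])
  rw [← Matrix.mul_assoc, hPB, Matrix.zero_mul]

end PosSemidef

end Matrix

/-- With `V`, `V_ss` symmetric positive definite, `Σ` positive
semidefinite and `A V_ss + V_ss Aᵀ + Σ = 0`, one has
`tr{(V_ss⁻¹ − V⁻¹) A (V − V_ss)} = −(1/2) tr{(V_ss⁻¹ − V⁻¹) Σ (V_ss⁻¹ − V⁻¹) V} ≤ 0`,
with equality (when `Σ` is positive definite) iff `V = V_ss`. -/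
theorem free_surprise_rate_nonpositive {n : ℕ}
    (A Sig V Vss : Matrix (Fin n) (Fin n) ℝ)
    (hV : V.PosDef) (hVss : Vss.PosDef) (hSig : Sig.PosSemidef)
    (hLyap : A * Vss + Vss * Aᵀ + Sig = 0) :
    ((Vss⁻¹ - V⁻¹) * A * (V - Vss)).trace
        = -(1 / 2 : ℝ) * ((Vss⁻¹ - V⁻¹) * Sig * (Vss⁻¹ - V⁻¹) * V).trace
      ∧ ((Vss⁻¹ - V⁻¹) * A * (V - Vss)).trace ≤ 0
      ∧ (Sig.PosDef →
          (((Vss⁻¹ - V⁻¹) * A * (V - Vss)).trace = 0 ↔ V = Vss)) := by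
  set D := Vss⁻¹ - V⁻¹
  have hVdet := V.isUnit_iff_isUnit_det.mp hV.isUnit
  have hVssdet := Vss.isUnit_iff_isUnit_det.mp hVss.isUnit
  have hD : D.IsHermitian := hVss.inv.isHermitian.sub hV.inv.isHermitian
  have hrate : (D * A * (V - Vss)).trace = -(1 / 2 : ℝ) * (D * Sig * D * V).trace := by
    have h2 := two_mul_trace_of_lyapunov_eq (isHermitian_iff_isSymm.mp hD)
      (isHermitian_iff_isSymm.mp hV.isHermitian) (isHermitian_iff_isSymm.mp hVss.isHermitian) hLyap
    rw [mul_inv_sub_inv_mul hVdet hVssdet] at h2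
    linarith
  have hDSigD : (D * Sig * D).PosSemidef := by
    simpa only [hD.eq] using hSig.conjTranspose_mul_mul_same D
  have hnonneg := hDSigD.trace_mul_nonneg hV.posSemidef
  refine ⟨hrate, by linarith, fun hSigPD ↦ ⟨fun hzero ↦ ?_, by rintro rfl; simp⟩⟩
  have hDSigDV : D * Sig * D * V = 0 :=
    (hDSigD.trace_mul_eq_zero_iff hV.posSemidef).mp (by linarith)
  have hSigD : Sig * D = 0 := by
    rw [← hSig.conjTranspose_mul_mul_same_eq_zero_iff, hD.eq]
    exact hV.isUnit.mul_left_eq_zero.mp hDSigDV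
  have hDzero : D = 0 := hSigPD.isUnit.mul_right_eq_zero.mp hSigD
  exact (Matrix.inv_inj (sub_eq_zero.mp hDzero) hVssdet).symm
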